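/- arXiv:2011.07488 — 7 statements merged into one kernel-verified Lean document; each statement's English description precedes it below -/
import Mathlib

section
/- Let E, F be real Banach spaces and T₀ ∈ B(E,F) with range T₀ closed. Let N and F₊ be closed subspaces of F with N ≠ {0} such that F = range T₀ ⊕ N and F = F₊ ⊕ N. Let Q denote the continuous projection onto F₊ with kernel N. Then T₀ and Q ∘ T₀ are path connected in the set S = { T ∈ B(E,F) : range T is closed, F = range T ⊕ N, and ker T = ker T₀ }. -/
/-!
Along the segment `L t = 1 + t • (Q - 1)` every `L t` moves points only within `N`, because
`Q - 1` maps `F` into `N`. Such a map is injective on the complement `range T₀` of `N`, so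
`L t ∘ T₀` keeps the kernel of `T₀`. If `π` is the continuous projection onto `range T₀`
along `N`, then `L t ∘ π` is again a continuous projection, with range `L t (range T₀)` and
kernel `N`; hence `range (L t ∘ T₀)` is a closed complement of `N`.
-/

open LinearMap (ker range)

section

variable {R E F : Type*} [Ring R] [AddCommGroup E] [Module R E] [AddCommGroup F] [Module R F]

theorem LinearMap.ker_comp_eq_of_apply_sub_mem {T : E →ₗ[R] F} {N : Submodule R F}
    (h : Disjoint (range T) N) {L : F →ₗ[R] F} (hL : ∀ y, L y - y ∈ N) :
    ker (L ∘ₗ T) = ker T := by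
  refine le_antisymm (fun x hx => ?_) (ker_le_ker_comp T L)
  have hLTx : L (T x) = 0 := hx
  have hTx : T x ∈ N := by simpa [hLTx] using hL (T x)
  exact Submodule.disjoint_def.mp h _ (mem_range_self T x) hTx

theorem Submodule.apply_sub_mem_of_isCompl {A N : Submodule R F} (h : IsCompl A N)
    {Q : F →ₗ[R] F} (hQfix : ∀ y ∈ A, Q y = y) (hQker : ∀ y ∈ N, Q y = 0) (y : F) :
    Q y - y ∈ N := by
  obtain ⟨a, ha, n, hn, rfl⟩ := Submodule.mem_sup.mp (h.sup_eq_top ▸ Submodule.mem_top (x := y))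
  simpa [hQfix a ha, hQker n hn] using N.neg_mem hn

end

namespace Submodule

variable {R F : Type*} [Ring R] [AddCommGroup F] [Module R F] [TopologicalSpace F]

theorem IsTopCompl.map_of_apply_sub_mem {M N : Submodule R F} (h : IsTopCompl M N)
    (L : F →L[R] F) (hL : ∀ y, L y - y ∈ N) : IsTopCompl (M.map (L : F →ₗ[R] F)) N := by
  set π := M.projectionL N h
  have hπL : ∀ y, π (L y) = π y := fun y => by
    rw [← sub_eq_zero, ← map_sub, projectionL_apply_eq_zero_iff]
    exact hL y
  have hππ : ∀ y, π (π y) = π y := fun y =>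
    projectionL_apply_left h ⟨π y, projectionL_apply_mem h y⟩
  have hidem : IsIdempotentElem (L ∘L π) := by
    refine ContinuousLinearMap.ext fun y => ?_
    show L (π (L (π y))) = L (π y)
    rw [hπL, hππ]
  have hrange : range (L ∘L π : F →ₗ[R] F) = M.map (L : F →ₗ[R] F) := by
    rw [ContinuousLinearMap.toLinearMap_comp, LinearMap.range_comp, toLinearMap_projectionL,
      range_projection]
  have hker : ker (L ∘L π : F →ₗ[R] F) = N := by
    have hdisj : Disjoint (range (M.projection N h.isCompl)) N := by
      rw [range_projection]
      exact h.isCompl.disjoint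
    rw [ContinuousLinearMap.toLinearMap_comp, toLinearMap_projectionL,
      LinearMap.ker_comp_eq_of_apply_sub_mem hdisj hL, ker_projection]
  exact hrange ▸ hker ▸ ContinuousLinearMap.IsIdempotentElem.isTopCompl hidem

end Submodule

theorem joined_to_projected_range_general
    {E : Type*} [NormedAddCommGroup E] [NormedSpace ℝ E]
    {F : Type*} [NormedAddCommGroup F] [NormedSpace ℝ F] [CompleteSpace F]
    (T₀ : E →L[ℝ] F) (hT₀c : IsClosed (LinearMap.range (T₀ : E →ₗ[ℝ] F) : Set F))
    (N Fstar : Submodule ℝ F)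
    (hNc : IsClosed (N : Set F))
    (h₁ : IsCompl (LinearMap.range (T₀ : E →ₗ[ℝ] F)) N) (h₂ : IsCompl Fstar N)
    (Q : F →L[ℝ] F)
    (hQfix : ∀ y ∈ Fstar, Q y = y) (hQker : ∀ y ∈ N, Q y = 0) :
    JoinedIn {T : E →L[ℝ] F | IsClosed (LinearMap.range (T : E →ₗ[ℝ] F) : Set F) ∧
        IsCompl (LinearMap.range (T : E →ₗ[ℝ] F)) N ∧ LinearMap.ker (T : E →ₗ[ℝ] F) = LinearMap.ker (T₀ : E →ₗ[ℝ] F)}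
      T₀ (Q.comp T₀) := by
  have hRN : (range (T₀ : E →ₗ[ℝ] F)).IsTopCompl N :=
    Submodule.IsCompl.isTopCompl_of_isClosed h₁ hT₀c hNc
  let L : ℝ → F →L[ℝ] F := fun t => .id ℝ F + t • (Q - .id ℝ F)
  have hL : ∀ t y, L t y - y ∈ N := fun t y => by
    simpa [L] using N.smul_mem t (Submodule.apply_sub_mem_of_isCompl h₂ (Q := Q) hQfix hQker y)
  refine JoinedIn.ofLine (f := fun t => L t ∘L T₀) (by fun_prop) (by ext; simp [L])
    (by ext; simp [L]) ?_
  rintro _ ⟨t, -, rfl⟩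
  have hLR := hRN.map_of_apply_sub_mem (L t) (hL t)
  rw [← LinearMap.range_comp, ← ContinuousLinearMap.toLinearMap_comp] at hLR
  exact ⟨hLR.isClosed, hLR.isCompl, LinearMap.ker_comp_eq_of_apply_sub_mem h₁.disjoint (hL t)⟩

/-- **Theorem 1.3.**
Let `E, F` be real Banach spaces and `T₀ ∈ B(E,F)` with closed range.  Let `N`
and `Fstar` be closed subspaces of `F` with `N ≠ {0}`, `F = range T₀ ⊕ N` and
`F = Fstar ⊕ N`.  Let `Q` be the continuous projection onto `Fstar` with kernel
`N`.  Then `T₀` and `Q ∘ T₀` are path connected in the set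
`S = { T ∈ B(E,F) : range T closed, F = range T ⊕ N, ker T = ker T₀ }`. -/
theorem joined_to_projected_range
    {E : Type*} [NormedAddCommGroup E] [NormedSpace ℝ E] [CompleteSpace E]
    {F : Type*} [NormedAddCommGroup F] [NormedSpace ℝ F] [CompleteSpace F]
    (T₀ : E →L[ℝ] F) (hT₀c : IsClosed (LinearMap.range (T₀ : E →ₗ[ℝ] F) : Set F))
    (N Fstar : Submodule ℝ F)
    (hNc : IsClosed (N : Set F)) (hFsc : IsClosed (Fstar : Set F))
    (hN : N ≠ ⊥)
    (h₁ : IsCompl (LinearMap.range (T₀ : E →ₗ[ℝ] F)) N) (h₂ : IsCompl Fstar N)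
    (Q : F →L[ℝ] F) (hQmem : ∀ y : F, Q y ∈ Fstar)
    (hQfix : ∀ y ∈ Fstar, Q y = y) (hQker : ∀ y ∈ N, Q y = 0) :
    JoinedIn {T : E →L[ℝ] F | IsClosed (LinearMap.range (T : E →ₗ[ℝ] F) : Set F) ∧
        IsCompl (LinearMap.range (T : E →ₗ[ℝ] F)) N ∧ LinearMap.ker (T : E →ₗ[ℝ] F) = LinearMap.ker (T₀ : E →ₗ[ℝ] F)}
      T₀ (Q.comp T₀) :=
  joined_to_projected_range_general T₀ hT₀c N Fstar hNc h₁ h₂ Q hQfix hQker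
end

section
/- Let E, F be real Banach spaces and T₀ ∈ B(E,F). Let R₀ and E₊ be closed subspaces of E with R₀ ≠ {0} such that E = ker T₀ ⊕ R₀ and E = E₊ ⊕ R₀. Let P denote the continuous projection onto R₀ with kernel E₊. Then T₀ and T₀ ∘ P are path connected in the set S = { T ∈ B(E,F) : E = ker T ⊕ R₀ and range T = range T₀ }. -/
/-!
Every operator on the segment from `T₀` to `T₀ ∘ P` has the form `T₀ ∘ (a • id + b • P)` with
`a + b = 1`, so it agrees with `T₀` on `R₀` and its range lies in `range T₀`. Because
`E = ker T₀ ⊕ R₀`, the range of `T₀` is already `T₀ '' R₀`; these two facts force the range to stay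
`range T₀` and the kernel to stay complementary to `R₀`.
-/

namespace LinearMap

variable {R M N : Type*} [Ring R] [AddCommGroup M] [Module R M] [AddCommGroup N] [Module R N]

theorem map_eq_map_of_eqOn {S T : M →ₗ[R] N} {U : Submodule R M} (hST : Set.EqOn S T U) :
    U.map S = U.map T :=
  SetLike.coe_injective <| by simp only [Submodule.map_coe, hST.image_eq]

theorem isCompl_ker_and_range_eq_of_eqOn_of_range_le {S T : M →ₗ[R] N} {U : Submodule R M}
    (hT : IsCompl (ker T) U) (hST : Set.EqOn S T U) (hrange : range S ≤ range T) :
    IsCompl (ker S) U ∧ range S = range T := by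
  have hmapT : U.map T = range T := Submodule.map_eq_range_iff.2 hT.codisjoint.symm
  have hrange_eq : range S = range T :=
    le_antisymm hrange (hmapT ▸ map_eq_map_of_eqOn hST ▸ map_le_range)
  refine ⟨⟨Submodule.disjoint_def.2 fun x hxS hxU => ?_, ?_⟩, hrange_eq⟩
  · exact Submodule.disjoint_def.1 hT.disjoint x (by rw [mem_ker, ← hST hxU]; exact hxS) hxU
  · rw [codisjoint_comm, ← Submodule.map_eq_range_iff, map_eq_map_of_eqOn hST, hmapT, hrange_eq]

end LinearMap

theorem joined_to_precomposed_projection_general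
    {E : Type*} [NormedAddCommGroup E] [NormedSpace ℝ E]
    {F : Type*} [NormedAddCommGroup F] [NormedSpace ℝ F]
    (T₀ : E →L[ℝ] F)
    (R₀ : Submodule ℝ E)
    (h₁ : IsCompl (LinearMap.ker (T₀ : E →ₗ[ℝ] F)) R₀)
    (P : E →L[ℝ] E)
    (hPfix : ∀ x ∈ R₀, P x = x) :
    JoinedIn {T : E →L[ℝ] F | IsCompl (LinearMap.ker (T : E →ₗ[ℝ] F)) R₀ ∧
        LinearMap.range (T : E →ₗ[ℝ] F) = LinearMap.range (T₀ : E →ₗ[ℝ] F)}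
      T₀ (T₀.comp P) := by
  refine JoinedIn.of_segment_subset ?_
  rintro _ ⟨a, b, -, -, hab, rfl⟩
  have hcomp : a • T₀ + b • T₀.comp P = T₀.comp (a • ContinuousLinearMap.id ℝ E + b • P) := by
    ext x; simp
  refine LinearMap.isCompl_ker_and_range_eq_of_eqOn_of_range_le h₁ (fun x hx => ?_) ?_
  · simp [hPfix x hx, ← add_smul, hab]
  · rw [hcomp]
    exact LinearMap.range_comp_le_range _ _

/-- **Theorem 1.4.**
Let `E, F` be real Banach spaces and `T₀ ∈ B(E,F)`.  Let `R₀` and `Estar` be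
closed subspaces of `E` with `R₀ ≠ {0}`, `E = ker T₀ ⊕ R₀` and `E = Estar ⊕ R₀`.
Let `P` be the continuous projection onto `R₀` with kernel `Estar`.  Then `T₀`
and `T₀ ∘ P` are path connected in the set
`S = { T ∈ B(E,F) : E = ker T ⊕ R₀ and range T = range T₀ }`. -/
theorem joined_to_precomposed_projection
    {E : Type*} [NormedAddCommGroup E] [NormedSpace ℝ E] [CompleteSpace E]
    {F : Type*} [NormedAddCommGroup F] [NormedSpace ℝ F] [CompleteSpace F]
    (T₀ : E →L[ℝ] F)
    (R₀ Estar : Submodule ℝ E)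
    (hR₀c : IsClosed (R₀ : Set E)) (hEsc : IsClosed (Estar : Set E))
    (hR₀ : R₀ ≠ ⊥)
    (h₁ : IsCompl (LinearMap.ker (T₀ : E →ₗ[ℝ] F)) R₀) (h₂ : IsCompl Estar R₀)
    (P : E →L[ℝ] E) (hPmem : ∀ x : E, P x ∈ R₀)
    (hPfix : ∀ x ∈ R₀, P x = x) (hPker : ∀ x ∈ Estar, P x = 0) :
    JoinedIn {T : E →L[ℝ] F | IsCompl (LinearMap.ker (T : E →ₗ[ℝ] F)) R₀ ∧
        LinearMap.range (T : E →ₗ[ℝ] F) = LinearMap.range (T₀ : E →ₗ[ℝ] F)}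
      T₀ (T₀.comp P) :=
  joined_to_precomposed_projection_general T₀ R₀ h₁ P hPfix
end

section
/- Let E be a real Banach space and let E₁, E₂ be finite-dimensional subspaces of E with dim E₁ = dim E₂. Then E₁ and E₂ possess a common closed complement: there exists a closed subspace R of E such that E = E₁ ⊕ R and E = E₂ ⊕ R. -/
open Module Submodule

/-- Two subspaces of equal finite rank inside a finite-dimensional subspace `W`
have a common complement within `W`. -/
lemma aux_common_compl_in {E : Type*} [AddCommGroup E] [Module ℝ E] :
    ∀ (n : ℕ) (W p q : Submodule ℝ E), FiniteDimensional ℝ W → p ≤ W → q ≤ W →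
      finrank ℝ p = finrank ℝ q → finrank ℝ W = finrank ℝ p + n →
      ∃ G : Submodule ℝ E, G ≤ W ∧ p ⊓ G = ⊥ ∧ p ⊔ G = W ∧ q ⊓ G = ⊥ ∧ q ⊔ G = W := by
  intro n
  induction n with
  | zero =>
    intro W p q hW hpW hqW hpq hrk
    haveI := hW
    haveI : FiniteDimensional ℝ p := Submodule.finiteDimensional_of_le hpW
    haveI : FiniteDimensional ℝ q := Submodule.finiteDimensional_of_le hqW
    have hp : p = W := by
      have := Submodule.eq_of_le_of_finrank_le hpW (by omega)
      exact this
    have hq : q = W := by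
      have := Submodule.eq_of_le_of_finrank_le hqW (by omega)
      exact this
    exact ⟨⊥, bot_le, by simp [hp, hq]⟩
  | succ n ih =>
    intro W p q hW hpW hqW hpq hrk
    haveI := hW
    haveI : FiniteDimensional ℝ p := Submodule.finiteDimensional_of_le hpW
    haveI : FiniteDimensional ℝ q := Submodule.finiteDimensional_of_le hqW
    -- p and q are proper in W
    have hpne : p ≠ W := by
      intro hEq
      rw [hEq] at hrk
      omega
    have hqne : q ≠ W := by
      intro hEq
      rw [hEq] at hpq
      omega
    obtain ⟨v₁, hv₁W, hv₁p⟩ := SetLike.exists_of_lt (lt_of_le_of_ne hpW hpne)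
    obtain ⟨v₂, hv₂W, hv₂q⟩ := SetLike.exists_of_lt (lt_of_le_of_ne hqW hqne)
    -- find v ∈ W with v ∉ p and v ∉ q
    obtain ⟨v, hvW, hvp, hvq⟩ : ∃ v, v ∈ W ∧ v ∉ p ∧ v ∉ q := by
      by_cases h1 : v₁ ∈ q
      · by_cases h2 : v₂ ∈ p
        · refine ⟨v₁ + v₂, W.add_mem hv₁W hv₂W, ?_, ?_⟩
          · intro hmem
            exact hv₁p (by simpa using p.sub_mem hmem h2)
          · intro hmem
            exact hv₂q (by simpa using q.sub_mem hmem h1)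
        · exact ⟨v₂, hv₂W, h2, hv₂q⟩
      · exact ⟨v₁, hv₁W, hv₁p, h1⟩
    have hv0 : v ≠ 0 := fun h0 => hvp (h0 ▸ p.zero_mem)
    have hspanW : (ℝ ∙ v) ≤ W := by
      rw [Submodule.span_le]
      simpa using hvW
    have hspan1 : finrank ℝ (ℝ ∙ v : Submodule ℝ E) = 1 := finrank_span_singleton hv0
    -- ranks of p ⊔ span v and q ⊔ span v
    have hrank : ∀ r : Submodule ℝ E, FiniteDimensional ℝ r → v ∉ r →
        finrank ℝ (r ⊔ ℝ ∙ v : Submodule ℝ E) = finrank ℝ r + 1 := by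
      intro r hr hvr
      haveI := hr
      have hdisj : r ⊓ (ℝ ∙ v) = ⊥ := by
        rw [← disjoint_iff]
        exact (Submodule.disjoint_span_singleton' hv0).mpr hvr
      have := Submodule.finrank_sup_add_finrank_inf_eq r (ℝ ∙ v)
      rw [hdisj, finrank_bot, hspan1] at this
      omega
    have hp' : finrank ℝ (p ⊔ ℝ ∙ v : Submodule ℝ E) = finrank ℝ p + 1 :=
      hrank p inferInstance hvp
    have hq' : finrank ℝ (q ⊔ ℝ ∙ v : Submodule ℝ E) = finrank ℝ q + 1 :=
      hrank q inferInstance hvq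
    obtain ⟨G, hGW, hpG, hpGsup, hqG, hqGsup⟩ :=
      ih W (p ⊔ ℝ ∙ v) (q ⊔ ℝ ∙ v) hW (sup_le hpW hspanW) (sup_le hqW hspanW)
        (by rw [hp', hq', hpq]) (by rw [hp']; omega)
    refine ⟨G ⊔ ℝ ∙ v, sup_le hGW hspanW, ?_, ?_, ?_, ?_⟩
    · -- p ⊓ (G ⊔ span v) = ⊥
      rw [eq_bot_iff]
      rintro x ⟨hxp, hxG⟩
      obtain ⟨g, hg, z, hz, hgz⟩ := Submodule.mem_sup.mp hxG
      obtain ⟨c, rfl⟩ := Submodule.mem_span_singleton.mp hz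
      have hgmem : g ∈ (p ⊔ ℝ ∙ v) ⊓ G := by
        constructor
        · have : g = x - c • v := by rw [← hgz]; abel
          rw [this]
          exact Submodule.sub_mem _ (Submodule.mem_sup_left hxp)
            (Submodule.mem_sup_right (Submodule.smul_mem _ _ (Submodule.mem_span_singleton_self v)))
        · exact hg
      rw [hpG] at hgmem
      have hg0 : g = 0 := hgmem
      have hx : x = c • v := by rw [← hgz, hg0, zero_add]
      by_cases hc : c = 0
      · simp [hx, hc]
      · exfalso
        apply hvp
        have : v = c⁻¹ • x := by rw [hx, smul_smul, inv_mul_cancel₀ hc, one_smul]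
        rw [this]
        exact p.smul_mem _ hxp
    · rw [sup_comm G, ← sup_assoc]
      exact hpGsup
    · -- q ⊓ (G ⊔ span v) = ⊥
      rw [eq_bot_iff]
      rintro x ⟨hxq, hxG⟩
      obtain ⟨g, hg, z, hz, hgz⟩ := Submodule.mem_sup.mp hxG
      obtain ⟨c, rfl⟩ := Submodule.mem_span_singleton.mp hz
      have hgmem : g ∈ (q ⊔ ℝ ∙ v) ⊓ G := by
        constructor
        · have : g = x - c • v := by rw [← hgz]; abel
          rw [this]
          exact Submodule.sub_mem _ (Submodule.mem_sup_left hxq)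
            (Submodule.mem_sup_right (Submodule.smul_mem _ _ (Submodule.mem_span_singleton_self v)))
        · exact hg
      rw [hqG] at hgmem
      have hg0 : g = 0 := hgmem
      have hx : x = c • v := by rw [← hgz, hg0, zero_add]
      by_cases hc : c = 0
      · simp [hx, hc]
      · exfalso
        apply hvq
        have : v = c⁻¹ • x := by rw [hx, smul_smul, inv_mul_cancel₀ hc, one_smul]
        rw [this]
        exact q.smul_mem _ hxq
    · rw [sup_comm G, ← sup_assoc]
      exact hqGsup

/-- **Theorem 1.5.**
Let `E` be a real Banach space and let `E₁`, `E₂` be finite-dimensional subspaces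
of `E` with `dim E₁ = dim E₂`.  Then `E₁` and `E₂` possess a common closed
complement `R`: `E = E₁ ⊕ R` and `E = E₂ ⊕ R`. -/
theorem common_complement_of_finrank_eq
    {E : Type*} [NormedAddCommGroup E] [NormedSpace ℝ E] [CompleteSpace E]
    (E₁ E₂ : Submodule ℝ E)
    [FiniteDimensional ℝ E₁] [FiniteDimensional ℝ E₂]
    (h : Module.finrank ℝ E₁ = Module.finrank ℝ E₂) :
    ∃ R : Submodule ℝ E, IsClosed (R : Set E) ∧ IsCompl E₁ R ∧ IsCompl E₂ R := by
  set W : Submodule ℝ E := E₁ ⊔ E₂ with hWdef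
  haveI : FiniteDimensional ℝ W := inferInstance
  have hE₁W : E₁ ≤ W := le_sup_left
  have hE₂W : E₂ ≤ W := le_sup_right
  have hle : finrank ℝ E₁ ≤ finrank ℝ W := Submodule.finrank_mono hE₁W
  obtain ⟨G, hGW, h1G, h1Gsup, h2G, h2Gsup⟩ :=
    aux_common_compl_in (finrank ℝ W - finrank ℝ E₁) W E₁ E₂ inferInstance hE₁W hE₂W h
      (by omega)
  -- closed complement N of W
  obtain ⟨N, hNclosed, hWN⟩ :=
    (Submodule.ClosedComplemented.of_finiteDimensional W).exists_isClosed_isCompl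
  refine ⟨G ⊔ N, ?_, ?_, ?_⟩
  · -- G ⊔ N is closed
    haveI : IsClosed (N : Set E) := hNclosed
    haveI : FiniteDimensional ℝ (E ⧸ N) :=
      Module.Finite.equiv (Submodule.quotientEquivOfIsCompl N W hWN.symm).symm
    haveI : FiniteDimensional ℝ (Submodule.map N.mkQ G) :=
      Submodule.finiteDimensional_of_le (le_top : Submodule.map N.mkQ G ≤ ⊤)
    have hmapclosed : IsClosed ((Submodule.map N.mkQ G : Submodule ℝ (E ⧸ N)) : Set (E ⧸ N)) :=
      Submodule.closed_of_finiteDimensional _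
    have hcomap : Submodule.comap N.mkQ (Submodule.map N.mkQ G) = N ⊔ G :=
      Submodule.comap_map_mkQ N G
    have hpre : ((G ⊔ N : Submodule ℝ E) : Set E) =
        N.mkQ ⁻¹' ((Submodule.map N.mkQ G : Submodule ℝ (E ⧸ N)) : Set (E ⧸ N)) := by
      rw [show (N.mkQ ⁻¹' ((Submodule.map N.mkQ G : Submodule ℝ (E ⧸ N)) : Set (E ⧸ N)))
          = ((Submodule.comap N.mkQ (Submodule.map N.mkQ G) : Submodule ℝ E) : Set E) from rfl,
        hcomap, sup_comm]
    rw [hpre]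
    exact hmapclosed.preimage continuous_quot_mk
  · -- IsCompl E₁ (G ⊔ N)
    constructor
    · rw [disjoint_iff, eq_bot_iff]
      rintro x ⟨hx1, hxGN⟩
      obtain ⟨g, hg, m, hm, hgm⟩ := Submodule.mem_sup.mp hxGN
      have hmW : m ∈ W ⊓ N := by
        constructor
        · have : m = x - g := by rw [← hgm]; abel
          rw [this]
          exact W.sub_mem (hE₁W hx1) (hGW hg)
        · exact hm
      rw [hWN.inf_eq_bot] at hmW
      have hm0 : m = 0 := hmW
      have hxg : x = g := by rw [← hgm, hm0, add_zero]
      have : x ∈ E₁ ⊓ G := ⟨hx1, hxg ▸ hg⟩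
      rw [h1G] at this
      exact this
    · rw [codisjoint_iff, ← sup_assoc, h1Gsup]
      exact hWN.sup_eq_top
  · -- IsCompl E₂ (G ⊔ N)
    constructor
    · rw [disjoint_iff, eq_bot_iff]
      rintro x ⟨hx2, hxGN⟩
      obtain ⟨g, hg, m, hm, hgm⟩ := Submodule.mem_sup.mp hxGN
      have hmW : m ∈ W ⊓ N := by
        constructor
        · have : m = x - g := by rw [← hgm]; abel
          rw [this]
          exact W.sub_mem (hE₂W hx2) (hGW hg)
        · exact hm
      rw [hWN.inf_eq_bot] at hmW
      have hm0 : m = 0 := hmW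
      have hxg : x = g := by rw [← hgm, hm0, add_zero]
      have : x ∈ E₂ ⊓ G := ⟨hx2, hxg ▸ hg⟩
      rw [h2G] at this
      exact this
    · rw [codisjoint_iff, ← sup_assoc, h2Gsup]
      exact hWN.sup_eq_top
end

section
/- Let E, F be real Banach spaces and let k be a natural number with k < dim F (the rank of F over ℝ exceeds k). Then F_k = { T ∈ B(E,F) : range T is finite-dimensional with dim range T = k } is path connected: any two operators T₁, T₂ ∈ F_k are joined by a continuous path lying in F_k. -/
/-!
Every `T ∈ F_k` is `x ↦ ∑ᵢ fᵢ x • yᵢ` for linearly independent families `f : Fin k → E →L[ℝ] ℝ`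
and `y : Fin k → F`, and every such sum lies in `F_k`. A Steinitz-type exchange links any two
linearly independent families by moves that replace one vector at a time. Because `k < dim F`,
the admissible replacements of `yⱼ` form the complement of a subspace of codimension at least
two, which is path connected, so the `y`-side moves freely. On the `f`-side the codimension may
be one, but then the segment to the new functional from `fⱼ` or from `-fⱼ` avoids the span of
the other `fᵢ`, and replacing `fⱼ` by `-fⱼ` is the same as replacing `yⱼ` by `-yⱼ`.
-/

open Function Set Submodule Relation

section

variable {K V ι : Type*} [AddCommGroup V]

theorem linearIndependent_update_iff [DivisionRing K] [Module K V] [DecidableEq ι] {y : ι → V}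
    (hy : LinearIndependent K y) (j : ι) (v : V) :
    LinearIndependent K (update y j v) ↔ v ∉ span K (y '' {j}ᶜ) := by
  have hEq : EqOn (update y j v) y {j}ᶜ := fun i hi => update_of_ne hi _ _
  rw [← linearIndepOn_univ_iff, ← show insert j ({j}ᶜ : Set ι) = univ by
      rw [insert_eq, union_compl_self],
    linearIndepOn_insert (by simp), linearIndepOn_congr hEq, image_congr hEq, update_self]
  exact and_iff_right (hy.linearIndepOn _)

theorem Finsupp.linearCombination_update [Semiring K] [Module K V] [DecidableEq ι] (y : ι → V)
    (l : ι) (w : V) (c : ι →₀ K) :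
    linearCombination K (Function.update y l w) c = linearCombination K y c + c l • (w - y l) := by
  have : Function.update y l w = y + Pi.single l (w - y l) := by
    ext i; rcases eq_or_ne i l with rfl | h <;> simp [*]
  rw [this]
  simp only [linearCombination_apply, Pi.add_apply, smul_add, Pi.single_apply, smul_ite,
    smul_zero, Finsupp.sum, Finset.sum_add_distrib, Finset.sum_ite_eq', Finsupp.mem_support_iff]
  split_ifs with h <;> simp_all

theorem Set.EqOn.update_insert {β : Type*} [DecidableEq ι] {y z : ι → β} {B : Set ι}
    (h : EqOn y z B) (j : ι) : EqOn (update y j (z j)) z (insert j B) := by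
  rintro i (rfl | hi)
  · exact update_self ..
  · rcases eq_or_ne i j with rfl | hij
    · exact update_self ..
    · rw [update_of_ne hij]; exact h hi

variable (K) in
def IndepUpdate [Semiring K] [Module K V] [DecidableEq ι] (a b : ι → V) : Prop :=
  LinearIndependent K a ∧ LinearIndependent K b ∧ ∃ j v, b = update a j v

section Exchange

variable [DivisionRing K] [Module K V] [DecidableEq ι]

/-- If `z j` lies in the span of the other `y i`, it has a nonzero coefficient on some `y l` with
`l ∉ B`; replacing `y l` by `y l + y j` first makes `z j` an admissible replacement of `y j`. -/
theorem exists_reflTransGen_indepUpdate_eqOn_insert {y z : ι → V} (hy : LinearIndependent K y)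
    (hz : LinearIndependent K z) {B : Set ι} {j : ι} (hjB : j ∉ B) (hyz : EqOn y z B) :
    ∃ y', ReflTransGen (IndepUpdate K) y y' ∧ LinearIndependent K y' ∧ EqOn y' z (insert j B) := by
  by_cases h : LinearIndependent K (update y j (z j))
  · exact ⟨_, .single ⟨hy, h, j, _, rfl⟩, h, hyz.update_insert j⟩
  rw [linearIndependent_update_iff hy, not_not,
    Finsupp.mem_span_image_iff_linearCombination] at h
  obtain ⟨c, hc, hcz⟩ := h
  obtain ⟨l, hlB, hcl⟩ : ∃ l ∉ B, c l ≠ 0 := by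
    by_contra! hcB
    refine hz.notMem_span_image hjB ?_
    rw [← image_congr hyz, Finsupp.mem_span_image_iff_linearCombination]
    exact ⟨c, fun i hi => by_contra fun hiB => Finsupp.mem_support_iff.1 hi (hcB i hiB), hcz⟩
  have hlj : l ≠ j := fun h => (Finsupp.mem_supported _ _).1 hc (Finsupp.mem_support_iff.2 hcl) h
  set y₁ := update y l (y l + y j)
  have hy₁ : LinearIndependent K y₁ := by
    refine (linearIndependent_update_iff hy l _).2 fun h =>
      hy.notMem_span_image (s := {l}ᶜ) (x := l) (by simp) ?_
    exact (Submodule.add_mem_iff_left _ (subset_span (mem_image_of_mem y hlj.symm))).1 h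
  have hy₂ : LinearIndependent K (update y₁ j (z j)) := by
    refine (linearIndependent_update_iff hy₁ j _).2 fun hzj => ?_
    have hsum : Finsupp.linearCombination K y₁ c ∈ span K (y₁ '' {j}ᶜ) :=
      (Finsupp.mem_span_image_iff_linearCombination _).2 ⟨c, hc, rfl⟩
    rw [Finsupp.linearCombination_update, hcz, add_sub_cancel_left,
      Submodule.add_mem_iff_right _ hzj, smul_mem_iff _ hcl] at hsum
    refine hy₁.notMem_span_image (s := {j}ᶜ) (x := j) (by simp) ?_
    rwa [show y₁ j = y j from update_of_ne hlj.symm _ _]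
  refine ⟨_, .tail (.single ⟨hy, hy₁, l, _, rfl⟩) ⟨hy₁, hy₂, j, _, rfl⟩, hy₂, ?_⟩
  refine EqOn.update_insert (fun i hi => ?_) j
  rw [show y₁ i = y i from update_of_ne (ne_of_mem_of_not_mem hi hlB) _ _]
  exact hyz hi

theorem reflTransGen_indepUpdate [Finite ι] {y z : ι → V} (hy : LinearIndependent K y)
    (hz : LinearIndependent K z) : ReflTransGen (IndepUpdate K) y z := by
  have key : ∀ s : Set ι, s.Finite → ∀ y, LinearIndependent K y → EqOn y z sᶜ →
      ReflTransGen (IndepUpdate K) y z := by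
    intro s hs
    induction s, hs using Set.Finite.induction_on with
    | empty =>
      intro y _ hyz
      obtain rfl : y = z := funext fun i => hyz (by simp)
      exact .refl
    | @insert j s hjs _ ih =>
      intro y hy hyz
      obtain ⟨y', hyy', hy', hy'z⟩ := exists_reflTransGen_indepUpdate_eqOn_insert hy hz
        (not_not_intro (mem_insert j s)) hyz
      exact hyy'.trans (ih y' hy' fun i hi => hy'z (by by_cases hij : i = j <;> simp_all))
  exact key univ finite_univ y hy (by simp)

end Exchange

theorem one_lt_rank_quotient_span_image_compl [DivisionRing K] [Module K V] [Fintype ι]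
    (hk : (Fintype.card ι : Cardinal) < Module.rank K V) (y : ι → V) (j : ι) :
    1 < Module.rank K (V ⧸ span K (y '' {j}ᶜ)) := by
  classical
  by_contra! hle
  have hspan : Module.rank K (span K (y '' {j}ᶜ)) ≤ (Fintype.card ι - 1 : ℕ) := by
    rw [show y '' {j}ᶜ = ((Finset.univ.erase j).image y : Set V) by ext; simp]
    refine (rank_span_finset_le _).trans (Nat.cast_le.2 ?_)
    exact Finset.card_image_le.trans (by simp [Finset.card_erase_of_mem])
  refine hk.not_ge ?_
  rw [← rank_quotient_add_rank_of_divisionRing (span K (y '' {j}ᶜ))]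
  calc _ ≤ 1 + ((Fintype.card ι - 1 : ℕ) : Cardinal) := add_le_add hle hspan
    _ = Fintype.card ι := by
      have := Fintype.card_pos_iff.2 ⟨j⟩
      norm_cast
      omega

section Segment

variable [Field K] [LinearOrder K] [IsStrictOrderedRing K] [Module K V] {S : Submodule K V}
  {x v : V}

theorem one_sub_smul_add_smul_notMem (hx : x ∉ S) (hv : ∀ a : K, a ≤ 0 → v - a • x ∉ S) {t : K}
    (ht : t ∈ Icc (0 : K) 1) : (1 - t) • x + t • v ∉ S := by
  intro hmem
  rcases ht.1.eq_or_lt with rfl | ht0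
  · simp_all
  refine hv (-((1 - t) / t)) (neg_nonpos.2 (div_nonneg (by linarith [ht.2]) ht0.le)) ?_
  have : v - -((1 - t) / t) • x = t⁻¹ • ((1 - t) • x + t • v) := by
    rw [smul_add, smul_smul, smul_smul, inv_mul_cancel₀ ht0.ne', one_smul, div_eq_inv_mul]
    module
  rw [this]
  exact S.smul_mem _ hmem

theorem forall_nonpos_sub_smul_notMem_or (hx : x ∉ S) (hv : v ∉ S) :
    (∀ a : K, a ≤ 0 → v - a • x ∉ S) ∨ ∀ a : K, a ≤ 0 → v - a • -x ∉ S := by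
  by_contra! h
  obtain ⟨⟨a, ha, hax⟩, b, hb, hbx⟩ := h
  have hab : (a + b) • x ∈ S := by
    convert S.sub_mem hbx hax using 1
    module
  rcases (add_nonpos ha hb).lt_or_eq with hlt | heq
  · exact hx ((S.smul_mem_iff hlt.ne).1 hab)
  · obtain rfl : a = 0 := by linarith
    simp_all

end Segment

section TopologicalVectorSpace

variable [Module ℝ V] [TopologicalSpace V] [IsTopologicalAddGroup V] [ContinuousSMul ℝ V]

theorem joinedIn_setOf_linearIndependent_update [DecidableEq ι] {y : ι → V}
    (hy : LinearIndependent ℝ y) {j : ι} {v : V}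
    (hv : ∀ a : ℝ, a ≤ 0 → v - a • y j ∉ span ℝ (y '' {j}ᶜ)) :
    JoinedIn {y | LinearIndependent ℝ y} y (update y j v) := by
  refine JoinedIn.ofLine (f := fun t : ℝ => update y j ((1 - t) • y j + t • v))
    (by fun_prop) (by simp) (by simp) ?_
  rintro _ ⟨t, ht, rfl⟩
  exact (linearIndependent_update_iff hy j _).2 <|
    one_sub_smul_add_smul_notMem (hy.notMem_span_image (x := j) (by simp)) hv ht

theorem joinedIn_setOf_linearIndependent_update_of_lt_rank [Fintype ι] [DecidableEq ι]
    (hk : (Fintype.card ι : Cardinal) < Module.rank ℝ V) {y : ι → V} (hy : LinearIndependent ℝ y)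
    {j : ι} {v : V} (hv : LinearIndependent ℝ (update y j v)) :
    JoinedIn {y | LinearIndependent ℝ y} y (update y j v) := by
  have hcompl :=
    isPathConnected_compl_of_one_lt_codim (one_lt_rank_quotient_span_image_compl hk y j)
  have hpath := (hcompl.joinedIn (y j) (hy.notMem_span_image (x := j) (by simp)) v
    ((linearIndependent_update_iff hy j v).1 hv)).map (by fun_prop : Continuous (update y j))
  rw [update_eq_self] at hpath
  exact hpath.mono (image_subset_iff.2 fun w hw => (linearIndependent_update_iff hy j w).2 hw)

theorem isPathConnected_setOf_linearIndependent [Fintype ι]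
    (hk : (Fintype.card ι : Cardinal) < Module.rank ℝ V) :
    IsPathConnected {y : ι → V | LinearIndependent ℝ y} := by
  classical
  obtain ⟨y, hy⟩ := exists_linearIndependent_of_le_rank hk.le
  refine isPathConnected_iff.2
    ⟨⟨y ∘ Fintype.equivFin ι, hy.comp _ (Fintype.equivFin ι).injective⟩, fun a ha b hb => ?_⟩
  have hab := reflTransGen_indepUpdate ha hb
  clear hb
  induction hab with
  | refl => exact .refl ha
  | tail _ hcd ih =>
    obtain ⟨hc, hd, j, v, rfl⟩ := hcd
    exact ih.trans (joinedIn_setOf_linearIndependent_update_of_lt_rank hk hc hd)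

end TopologicalVectorSpace

theorem ContinuousLinearMap.linearIndependent_iff_surjective_pi {𝕜 M : Type*} [Finite ι]
    [Field 𝕜] [TopologicalSpace 𝕜] [IsTopologicalRing 𝕜] [AddCommGroup M] [Module 𝕜 M]
    [TopologicalSpace M] (f : ι → M →L[𝕜] 𝕜) :
    LinearIndependent 𝕜 f ↔ Surjective (ContinuousLinearMap.pi f) := by
  let coeFn : (M →L[𝕜] 𝕜) →ₗ[𝕜] (M → 𝕜) := LinearMap.ltoFun 𝕜 M 𝕜 𝕜 ∘ₗ coeLM 𝕜
  have hinj : LinearMap.ker coeFn = ⊥ :=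
    LinearMap.ker_eq_bot.2 fun a b h => ContinuousLinearMap.ext (congrFun h)
  change _ ↔ Surjective (ContinuousLinearMap.pi f : M →ₗ[𝕜] ι → 𝕜)
  rw [← coeFn.linearIndependent_iff hinj, ← span_flip_eq_top_iff_linearIndependent,
    ← LinearMap.range_eq_top, show range (_root_.flip (coeFn ∘ f)) =
      LinearMap.range (pi f : M →ₗ[𝕜] ι → 𝕜) from
      (LinearMap.coe_range (pi f : M →ₗ[𝕜] ι → 𝕜)).symm, span_eq]

section Operators

variable {E F : Type*} [NormedAddCommGroup E] [NormedSpace ℝ E] [NormedAddCommGroup F]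
  [NormedSpace ℝ F]

variable (E F) in
def opsOfRank (k : ℕ) : Set (E →L[ℝ] F) :=
  {T | FiniteDimensional ℝ (LinearMap.range (T : E →ₗ[ℝ] F)) ∧
    Module.finrank ℝ (LinearMap.range (T : E →ₗ[ℝ] F)) = k}

noncomputable def sumSmulRight [Fintype ι] (f : ι → E →L[ℝ] ℝ) (y : ι → F) : E →L[ℝ] F :=
  ∑ i, (f i).smulRight (y i)

@[fun_prop]
theorem Continuous.sumSmulRight [Fintype ι] {X : Type*} [TopologicalSpace X]
    {f : X → ι → E →L[ℝ] ℝ} {y : X → ι → F} (hf : Continuous f) (hy : Continuous y) :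
    Continuous fun x => _root_.sumSmulRight (f x) (y x) := by
  have := (ContinuousLinearMap.smulRightL ℝ E F).continuous₂
  unfold _root_.sumSmulRight
  fun_prop

theorem sumSmulRight_update_neg_left [Fintype ι] [DecidableEq ι] (f : ι → E →L[ℝ] ℝ) (y : ι → F)
    (j : ι) : sumSmulRight (update f j (-f j)) y = sumSmulRight f (update y j (-y j)) := by
  refine Finset.sum_congr rfl fun i _ => ?_
  rcases eq_or_ne i j with rfl | hij
  · ext; simp
  · simp only [update_of_ne hij]

theorem coe_sumSmulRight [Fintype ι] (f : ι → E →L[ℝ] ℝ) (y : ι → F) :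
    (sumSmulRight f y : E →ₗ[ℝ] F) =
      Fintype.linearCombination ℝ y ∘ₗ (ContinuousLinearMap.pi f : E →ₗ[ℝ] ι → ℝ) := by
  ext x
  simp [sumSmulRight, Fintype.linearCombination_apply]

theorem range_sumSmulRight [Fintype ι] {f : ι → E →L[ℝ] ℝ} (hf : LinearIndependent ℝ f)
    (y : ι → F) : LinearMap.range (sumSmulRight f y : E →ₗ[ℝ] F) = span ℝ (range y) := by
  rw [coe_sumSmulRight, LinearMap.range_comp,
    LinearMap.range_eq_top.2 ((ContinuousLinearMap.linearIndependent_iff_surjective_pi f).1 hf),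
    Submodule.map_top, Fintype.range_linearCombination]

theorem sumSmulRight_mem_opsOfRank [Fintype ι] {f : ι → E →L[ℝ] ℝ} {y : ι → F}
    (hf : LinearIndependent ℝ f) (hy : LinearIndependent ℝ y) :
    sumSmulRight f y ∈ opsOfRank E F (Fintype.card ι) := by
  rw [opsOfRank, mem_ofPred_eq, range_sumSmulRight hf, finrank_span_eq_card hy]
  exact ⟨FiniteDimensional.span_of_finite ℝ (finite_range y), rfl⟩

theorem exists_eq_sumSmulRight {k : ℕ} {T : E →L[ℝ] F} (hT : T ∈ opsOfRank E F k) :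
    ∃ (f : Fin k → E →L[ℝ] ℝ) (y : Fin k → F),
      LinearIndependent ℝ f ∧ LinearIndependent ℝ y ∧ sumSmulRight f y = T := by
  obtain ⟨hfin, hrank⟩ := hT
  set R := LinearMap.range (T : E →ₗ[ℝ] F)
  let b : Module.Basis (Fin k) ℝ R := (Module.finBasis ℝ R).reindex (finCongr hrank)
  let T' : E →L[ℝ] R := T.codRestrict R (LinearMap.mem_range_self (T : E →ₗ[ℝ] F))
  let f i := (LinearMap.toContinuousLinearMap (b.coord i)).comp T'
  refine ⟨f, fun i => b i, ?_, b.linearIndependent.map' R.subtype R.ker_subtype, ?_⟩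
  · refine (ContinuousLinearMap.linearIndependent_iff_surjective_pi f).2 fun v => ?_
    obtain ⟨x, hx⟩ := (b.equivFun.symm v).2
    refine ⟨x, funext fun i => ?_⟩
    have hT'x : T' x = b.equivFun.symm v := Subtype.ext hx
    simp [f, hT'x, Finsupp.single_apply]
  · ext x
    calc sumSmulRight f (fun i => (b i : F)) x = ((∑ i, b.repr (T' x) i • b i : R) : F) := by
          simp [sumSmulRight, f, -Module.Basis.sum_repr]
      _ = T x := by rw [b.sum_repr]; rfl

theorem joinedIn_sumSmulRight_right [Fintype ι] (hk : (Fintype.card ι : Cardinal) < Module.rank ℝ F)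
    {f : ι → E →L[ℝ] ℝ} (hf : LinearIndependent ℝ f) {y z : ι → F} (hy : LinearIndependent ℝ y)
    (hz : LinearIndependent ℝ z) :
    JoinedIn (opsOfRank E F (Fintype.card ι)) (sumSmulRight f y) (sumSmulRight f z) :=
  ((isPathConnected_setOf_linearIndependent hk).joinedIn y hy z hz |>.map
    (by fun_prop : Continuous (sumSmulRight f))).mono
    (image_subset_iff.2 fun _ hw => sumSmulRight_mem_opsOfRank hf hw)

theorem joinedIn_sumSmulRight_update_left [Fintype ι] [DecidableEq ι]
    (hk : (Fintype.card ι : Cardinal) < Module.rank ℝ F) {f : ι → E →L[ℝ] ℝ}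
    (hf : LinearIndependent ℝ f) {j : ι} {g : E →L[ℝ] ℝ} (hg : LinearIndependent ℝ (update f j g))
    {z : ι → F} (hz : LinearIndependent ℝ z) :
    JoinedIn (opsOfRank E F (Fintype.card ι)) (sumSmulRight f z)
      (sumSmulRight (update f j g) z) := by
  have hmap {a b : ι → E →L[ℝ] ℝ} (h : JoinedIn {a | LinearIndependent ℝ a} a b) :
      JoinedIn (opsOfRank E F (Fintype.card ι)) (sumSmulRight a z) (sumSmulRight b z) :=
    (h.map (by fun_prop : Continuous fun a => sumSmulRight a z)).mono
      (image_subset_iff.2 fun _ ha => sumSmulRight_mem_opsOfRank ha hz)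
  have hfj : f j ∉ span ℝ (f '' {j}ᶜ) := hf.notMem_span_image (by simp)
  rcases forall_nonpos_sub_smul_notMem_or hfj ((linearIndependent_update_iff hf j g).1 hg) with
    h | h
  · exact hmap (joinedIn_setOf_linearIndependent_update hf h)
  set f' := update f j (-f j)
  have hf' : LinearIndependent ℝ f' :=
    (linearIndependent_update_iff hf j _).2 (by rwa [neg_mem_iff])
  have hspan : span ℝ (f' '' {j}ᶜ) = span ℝ (f '' {j}ᶜ) :=
    congrArg (span ℝ) (image_congr fun i hi => update_of_ne hi _ _)
  have hflip :
      JoinedIn (opsOfRank E F (Fintype.card ι)) (sumSmulRight f z) (sumSmulRight f' z) := by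
    rw [sumSmulRight_update_neg_left]
    refine joinedIn_sumSmulRight_right hk hf hz ((linearIndependent_update_iff hz j _).2 ?_)
    rw [neg_mem_iff]
    exact hz.notMem_span_image (by simp)
  have hseg := joinedIn_setOf_linearIndependent_update hf' (j := j) (v := g)
    (by rwa [hspan, show f' j = -f j from update_self ..])
  rw [update_idem] at hseg
  exact hflip.trans (hmap hseg)

theorem joinedIn_sumSmulRight_left [Fintype ι]
    (hk : (Fintype.card ι : Cardinal) < Module.rank ℝ F) {f g : ι → E →L[ℝ] ℝ}
    (hf : LinearIndependent ℝ f) (hg : LinearIndependent ℝ g) {z : ι → F}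
    (hz : LinearIndependent ℝ z) :
    JoinedIn (opsOfRank E F (Fintype.card ι)) (sumSmulRight f z) (sumSmulRight g z) := by
  classical
  have hfg := reflTransGen_indepUpdate hf hg
  clear hg
  induction hfg with
  | refl => exact .refl (sumSmulRight_mem_opsOfRank hf hz)
  | tail _ hab ih =>
    obtain ⟨ha, hb, j, v, rfl⟩ := hab
    exact ih.trans (joinedIn_sumSmulRight_update_left hk ha hb hz)

end Operators

end

theorem Fk_pathConnected_general
    {E : Type*} [NormedAddCommGroup E] [NormedSpace ℝ E]
    {F : Type*} [NormedAddCommGroup F] [NormedSpace ℝ F]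
    (k : ℕ) (hk : (k : Cardinal) < Module.rank ℝ F)
    (T₁ T₂ : E →L[ℝ] F)
    (hT₁ : T₁ ∈ {T : E →L[ℝ] F | FiniteDimensional ℝ (LinearMap.range (T : E →ₗ[ℝ] F)) ∧
        Module.finrank ℝ (LinearMap.range (T : E →ₗ[ℝ] F)) = k})
    (hT₂ : T₂ ∈ {T : E →L[ℝ] F | FiniteDimensional ℝ (LinearMap.range (T : E →ₗ[ℝ] F)) ∧
        Module.finrank ℝ (LinearMap.range (T : E →ₗ[ℝ] F)) = k}) :
    JoinedIn {T : E →L[ℝ] F | FiniteDimensional ℝ (LinearMap.range (T : E →ₗ[ℝ] F)) ∧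
        Module.finrank ℝ (LinearMap.range (T : E →ₗ[ℝ] F)) = k} T₁ T₂ := by
  obtain ⟨f, y, hf, hy, rfl⟩ := exists_eq_sumSmulRight (k := k) hT₁
  obtain ⟨g, z, hg, hz, rfl⟩ := exists_eq_sumSmulRight (k := k) hT₂
  rw [← Fintype.card_fin k] at hk
  have h := (joinedIn_sumSmulRight_right hk hf hy hz).trans (joinedIn_sumSmulRight_left hk hf hg hz)
  rwa [Fintype.card_fin] at h

/-- **Theorem 2.3.**
Let `E, F` be real Banach spaces and `k < dim F` a natural number.  Then
`F_k = { T ∈ B(E,F) : range T finite-dimensional, dim range T = k }` is path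
connected: any two of its elements are joined by a continuous path in `F_k`. -/
theorem Fk_pathConnected
    {E : Type*} [NormedAddCommGroup E] [NormedSpace ℝ E] [CompleteSpace E]
    {F : Type*} [NormedAddCommGroup F] [NormedSpace ℝ F] [CompleteSpace F]
    (k : ℕ) (hk : (k : Cardinal) < Module.rank ℝ F)
    (T₁ T₂ : E →L[ℝ] F)
    (hT₁ : T₁ ∈ {T : E →L[ℝ] F | FiniteDimensional ℝ (LinearMap.range (T : E →ₗ[ℝ] F)) ∧
        Module.finrank ℝ (LinearMap.range (T : E →ₗ[ℝ] F)) = k})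
    (hT₂ : T₂ ∈ {T : E →L[ℝ] F | FiniteDimensional ℝ (LinearMap.range (T : E →ₗ[ℝ] F)) ∧
        Module.finrank ℝ (LinearMap.range (T : E →ₗ[ℝ] F)) = k}) :
    JoinedIn {T : E →L[ℝ] F | FiniteDimensional ℝ (LinearMap.range (T : E →ₗ[ℝ] F)) ∧
        Module.finrank ℝ (LinearMap.range (T : E →ₗ[ℝ] F)) = k} T₁ T₂ :=
  Fk_pathConnected_general k hk T₁ T₂ hT₁ hT₂
end

section
/- Let E, F be real Banach spaces and let k be a natural number with k < dim E and k < dim F. If T₀ ∈ B(E,F) has finite-dimensional range with dim range T₀ = k, then the equivalence class T̃₀ = { T ∈ B(E,F) : T double splitting and T₀ ≈ T } (for the common-complement chain relation ≈) equals F_k = { T ∈ B(E,F) : dim range T = k }. -/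
/-!
Along a chain of common complements all the ranges are isomorphic, since two complements of the
same subspace `S` are both isomorphic to `F ⧸ S`; hence every `T` with `T₀ ≈ T` has rank `k`.
Conversely, if `rank T = k`, one step of the chain suffices. The kernels of `T₀` and `T` have the
same finite codimension `k`, and such subspaces have a common complement: pick a vector outside
both, add it to both, and induct on the codimension. This complement is finite-dimensional, hence
closed. For the ranges, choose a closed complement `W` of `range T₀ + range T`; then
`range T₀ + W` and `range T + W` have equal finite codimension, and `W + C` is a closed common
complement of the ranges whenever `C` is a common complement of those two subspaces.
-/

variable {E F : Type*}
  [NormedAddCommGroup E] [NormedSpace ℝ E] [CompleteSpace E]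
  [NormedAddCommGroup F] [NormedSpace ℝ F] [CompleteSpace F]

/-- An operator `T ∈ B(E,F)` is *double splitting* if its kernel is a closed
subspace admitting a closed complement in `E`, and its range is a closed
subspace admitting a closed complement in `F`. -/
def IsDoubleSplitting (T : E →L[ℝ] F) : Prop :=
  (∃ R : Submodule ℝ E, IsClosed (R : Set E) ∧ IsCompl (LinearMap.ker (T : E →ₗ[ℝ] F)) R) ∧
  IsClosed (LinearMap.range (T : E →ₗ[ℝ] F) : Set F) ∧
  (∃ S : Submodule ℝ F, IsClosed (S : Set F) ∧ IsCompl (LinearMap.range (T : E →ₗ[ℝ] F)) S)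

/-- The *common-complement chain relation* `T₀ ≈ T₁` (Definition 2.1): there
are closed subspaces `N₀ = ker T₀, N₁, …, N_m, N_{m+1} = ker T₁` of `E` with
common closed complements `R₁, …, R_{m+1}` (`E = N_{i-1} ⊕ R_i = N_i ⊕ R_i`),
and closed subspaces `F₀ = range T₀, F₁, …, F_n, F_{n+1} = range T₁` of `F`
with common closed complements `S₁, …, S_{n+1}`
(`F = F_{j-1} ⊕ S_j = F_j ⊕ S_j`). -/
def ChainRel (T₀ T₁ : E →L[ℝ] F) : Prop :=
  ∃ (m n : ℕ) (N : Fin (m + 2) → Submodule ℝ E) (R : Fin (m + 1) → Submodule ℝ E)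
    (G : Fin (n + 2) → Submodule ℝ F) (S : Fin (n + 1) → Submodule ℝ F),
    (∀ i, IsClosed ((N i : Set E))) ∧ (∀ i, IsClosed ((R i : Set E))) ∧
    (∀ j, IsClosed ((G j : Set F))) ∧ (∀ j, IsClosed ((S j : Set F))) ∧
    N 0 = LinearMap.ker (T₀ : E →ₗ[ℝ] F) ∧ N (Fin.last (m + 1)) = LinearMap.ker (T₁ : E →ₗ[ℝ] F) ∧
    G 0 = LinearMap.range (T₀ : E →ₗ[ℝ] F) ∧ G (Fin.last (n + 1)) = LinearMap.range (T₁ : E →ₗ[ℝ] F) ∧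
    (∀ i : Fin (m + 1), IsCompl (N i.castSucc) (R i) ∧ IsCompl (N i.succ) (R i)) ∧
    (∀ j : Fin (n + 1), IsCompl (G j.castSucc) (S j) ∧ IsCompl (G j.succ) (S j))

open Module Submodule

section Ring

variable {R M : Type*} [Ring R] [AddCommGroup M] [Module R M]

theorem Submodule.exists_notMem_notMem_of_ne_top {N₀ N₁ : Submodule R M} (h₀ : N₀ ≠ ⊤)
    (h₁ : N₁ ≠ ⊤) : ∃ v, v ∉ N₀ ∧ v ∉ N₁ := by
  by_contra! h
  have := AddSubgroupClass.subset_union (H := (⊤ : Submodule R M)) (K := N₀) (L := N₁)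
  simp_all [top_le_iff, or_iff_not_imp_left, Set.subset_def]

theorem Submodule.nonempty_linearEquiv_of_isCompl_chain {n : ℕ} {G : Fin (n + 2) → Submodule R M}
    {S : Fin (n + 1) → Submodule R M}
    (hGS : ∀ j : Fin (n + 1), IsCompl (G j.castSucc) (S j) ∧ IsCompl (G j.succ) (S j)) :
    Nonempty (G 0 ≃ₗ[R] G (Fin.last (n + 1))) := by
  suffices ∀ j, Nonempty (G 0 ≃ₗ[R] G j) from this _
  intro j
  induction j using Fin.induction with
  | zero => exact ⟨.refl R _⟩
  | succ j ih =>
    obtain ⟨e⟩ := ih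
    exact ⟨e ≪≫ₗ (quotientEquivOfIsCompl _ _ (hGS j).1.symm).symm ≪≫ₗ
      quotientEquivOfIsCompl _ _ (hGS j).2.symm⟩

end Ring

section Field

variable {K V : Type*} [Field K] [AddCommGroup V] [Module K V]

theorem Submodule.finrank_quotient_sup_add_finrank {N P : Submodule K V}
    [FiniteDimensional K (V ⧸ N)] (h : Disjoint N P) :
    finrank K (V ⧸ (N ⊔ P)) + finrank K P = finrank K (V ⧸ N) := by
  have hmap : map N.mkQ (N ⊔ P) = LinearMap.range (N.mkQ ∘ₗ P.subtype) := by
    rw [map_sup, mkQ_map_self, bot_sup_eq, LinearMap.range_comp, range_subtype]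
  have hker : LinearMap.ker (N.mkQ ∘ₗ P.subtype) = ⊥ := by
    rw [LinearMap.ker_comp, ker_mkQ, ← disjoint_iff_comap_eq_bot, disjoint_comm]
    exact h
  rw [← (quotientQuotientEquivQuotient N _ le_sup_left).finrank_eq,
    ← finrank_quotient_add_finrank (map N.mkQ (N ⊔ P)), hmap,
    LinearMap.finrank_range_of_inj (LinearMap.ker_eq_bot.1 hker)]

theorem Submodule.finrank_quotient_eq_zero_iff {N : Submodule K V}
    [FiniteDimensional K (V ⧸ N)] :
    finrank K (V ⧸ N) = 0 ↔ N = ⊤ :=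
  finrank_zero_iff.trans Quotient.subsingleton_iff

theorem Submodule.exists_isCompl_isCompl_of_finrank_quotient_eq {N₀ N₁ : Submodule K V}
    [FiniteDimensional K (V ⧸ N₀)] [FiniteDimensional K (V ⧸ N₁)]
    (h : finrank K (V ⧸ N₀) = finrank K (V ⧸ N₁)) :
    ∃ R : Submodule K V, FiniteDimensional K R ∧ IsCompl N₀ R ∧ IsCompl N₁ R := by
  induction hd : finrank K (V ⧸ N₀) generalizing N₀ N₁ with
  | zero =>
    obtain rfl : N₀ = ⊤ := finrank_quotient_eq_zero_iff.1 hd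
    obtain rfl : N₁ = ⊤ := finrank_quotient_eq_zero_iff.1 (h ▸ hd)
    exact ⟨⊥, inferInstance, isCompl_top_bot, isCompl_top_bot⟩
  | succ d ih =>
    have ne_top {N : Submodule K V} [FiniteDimensional K (V ⧸ N)]
        (h : finrank K (V ⧸ N) = d + 1) : N ≠ ⊤ := by
      rintro rfl
      simp [finrank_quotient_eq_zero_iff.2] at h
    obtain ⟨v, hv₀, hv₁⟩ := exists_notMem_notMem_of_ne_top (ne_top hd) (ne_top (h ▸ hd))
    have hdisj {N : Submodule K V} (hv : v ∉ N) : Disjoint N (K ∙ v) :=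
      disjoint_span_singleton.2 fun h ↦ absurd h hv
    have hrank_v : finrank K (K ∙ v) = 1 := finrank_span_singleton fun h ↦ hv₀ (h ▸ N₀.zero_mem)
    have h₀ := finrank_quotient_sup_add_finrank (hdisj hv₀)
    have h₁ := finrank_quotient_sup_add_finrank (hdisj hv₁)
    have : FiniteDimensional K (V ⧸ (N₀ ⊔ K ∙ v)) := CoFG.of_le le_sup_left ‹_›
    have : FiniteDimensional K (V ⧸ (N₁ ⊔ K ∙ v)) := CoFG.of_le le_sup_left ‹_›
    obtain ⟨R, _, hR₀, hR₁⟩ := ih (N₀ := N₀ ⊔ K ∙ v) (N₁ := N₁ ⊔ K ∙ v) (by omega) (by omega)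
    exact ⟨K ∙ v ⊔ R, inferInstance, (hdisj hv₀).isCompl_sup_right_of_isCompl_sup_left hR₀,
      (hdisj hv₁).isCompl_sup_right_of_isCompl_sup_left hR₁⟩

theorem LinearMap.exists_isCompl_ker_ker_of_finrank_range_eq {W : Type*} [AddCommGroup W]
    [Module K W] {f₀ f₁ : V →ₗ[K] W} [FiniteDimensional K (range f₀)]
    [FiniteDimensional K (range f₁)] (h : finrank K (range f₀) = finrank K (range f₁)) :
    ∃ R : Submodule K V, FiniteDimensional K R ∧ IsCompl (ker f₀) R ∧ IsCompl (ker f₁) R :=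
  have := f₀.quotKerEquivRange.symm.finiteDimensional
  have := f₁.quotKerEquivRange.symm.finiteDimensional
  exists_isCompl_isCompl_of_finrank_quotient_eq <| by
    rwa [f₀.quotKerEquivRange.finrank_eq, f₁.quotKerEquivRange.finrank_eq]

end Field

theorem Submodule.exists_isClosed_isCompl_isCompl_of_finrank_eq {𝕜 X : Type*} [RCLike 𝕜]
    [NormedAddCommGroup X] [NormedSpace 𝕜 X] {G₀ G₁ : Submodule 𝕜 X}
    [FiniteDimensional 𝕜 G₀] [FiniteDimensional 𝕜 G₁] (h : finrank 𝕜 G₀ = finrank 𝕜 G₁) :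
    ∃ S : Submodule 𝕜 X, IsClosed (S : Set X) ∧ IsCompl G₀ S ∧ IsCompl G₁ S := by
  obtain ⟨W, hW, hHW⟩ :=
    (ClosedComplemented.of_finiteDimensional (G₀ ⊔ G₁)).exists_isClosed_isCompl
  have : FiniteDimensional 𝕜 (X ⧸ W) :=
    (quotientEquivOfIsCompl W _ hHW.symm).symm.finiteDimensional
  have hdisj₀ : Disjoint W G₀ := hHW.disjoint.symm.mono_right le_sup_left
  have hdisj₁ : Disjoint W G₁ := hHW.disjoint.symm.mono_right le_sup_right
  have h₀ := finrank_quotient_sup_add_finrank hdisj₀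
  have h₁ := finrank_quotient_sup_add_finrank hdisj₁
  have : FiniteDimensional 𝕜 (X ⧸ (W ⊔ G₀)) := CoFG.of_le le_sup_left ‹_›
  have : FiniteDimensional 𝕜 (X ⧸ (W ⊔ G₁)) := CoFG.of_le le_sup_left ‹_›
  obtain ⟨C, _, hC₀, hC₁⟩ := exists_isCompl_isCompl_of_finrank_quotient_eq (N₀ := W ⊔ G₀)
    (N₁ := W ⊔ G₁) (by omega)
  refine ⟨W ⊔ C, W.isClosed_sup_finiteDimensional C hW, ?_, ?_⟩
  · exact hdisj₀.symm.isCompl_sup_right_of_isCompl_sup_left (sup_comm W G₀ ▸ hC₀)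
  · exact hdisj₁.symm.isCompl_sup_right_of_isCompl_sup_left (sup_comm W G₁ ▸ hC₁)

theorem chainRel_of_isCompl {X Y : Type*} [NormedAddCommGroup X] [NormedSpace ℝ X]
    [NormedAddCommGroup Y] [NormedSpace ℝ Y] {T₀ T₁ : X →L[ℝ] Y} {R : Submodule ℝ X}
    {S : Submodule ℝ Y}
    (hR : IsClosed (R : Set X)) (hS : IsClosed (S : Set Y))
    (hrange₀ : IsClosed (LinearMap.range (T₀ : X →ₗ[ℝ] Y) : Set Y))
    (hrange₁ : IsClosed (LinearMap.range (T₁ : X →ₗ[ℝ] Y) : Set Y))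
    (hR₀ : IsCompl (LinearMap.ker (T₀ : X →ₗ[ℝ] Y)) R)
    (hR₁ : IsCompl (LinearMap.ker (T₁ : X →ₗ[ℝ] Y)) R)
    (hS₀ : IsCompl (LinearMap.range (T₀ : X →ₗ[ℝ] Y)) S)
    (hS₁ : IsCompl (LinearMap.range (T₁ : X →ₗ[ℝ] Y)) S) :
    ChainRel T₀ T₁ := by
  refine ⟨0, 0, ![LinearMap.ker (T₀ : X →ₗ[ℝ] Y), LinearMap.ker (T₁ : X →ₗ[ℝ] Y)], fun _ ↦ R,
    ![LinearMap.range (T₀ : X →ₗ[ℝ] Y), LinearMap.range (T₁ : X →ₗ[ℝ] Y)], fun _ ↦ S,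
    ?_, fun _ ↦ hR, ?_, fun _ ↦ hS, rfl, rfl, rfl, rfl,
    Fin.forall_fin_one.2 ⟨hR₀, hR₁⟩, Fin.forall_fin_one.2 ⟨hS₀, hS₁⟩⟩
  · intro i
    fin_cases i
    exacts [T₀.isClosed_ker, T₁.isClosed_ker]
  · intro j
    fin_cases j
    exacts [hrange₀, hrange₁]

theorem equivalence_class_eq_Fk_general
    (k : ℕ)
    (T₀ : E →L[ℝ] F)
    (hT₀fin : FiniteDimensional ℝ (LinearMap.range (T₀ : E →ₗ[ℝ] F)))
    (hT₀rk : Module.finrank ℝ (LinearMap.range (T₀ : E →ₗ[ℝ] F)) = k) :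
    {T : E →L[ℝ] F | IsDoubleSplitting T ∧ ChainRel T₀ T} =
      {T : E →L[ℝ] F | FiniteDimensional ℝ (LinearMap.range (T : E →ₗ[ℝ] F)) ∧
        Module.finrank ℝ (LinearMap.range (T : E →ₗ[ℝ] F)) = k} := by
  ext T
  constructor
  · rintro ⟨-, _, _, _, _, G, _, -, -, -, -, -, -, hG₀, hGlast, -, hGS⟩
    obtain ⟨e⟩ := nonempty_linearEquiv_of_isCompl_chain hGS
    rw [hG₀, hGlast] at e
    exact ⟨e.finiteDimensional, e.finrank_eq.symm.trans hT₀rk⟩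
  · rintro ⟨hfin, hrk⟩
    have hrank := hT₀rk.trans hrk.symm
    obtain ⟨R, _, hR₀, hR₁⟩ := LinearMap.exists_isCompl_ker_ker_of_finrank_range_eq hrank
    obtain ⟨S, hS, hS₀, hS₁⟩ := exists_isClosed_isCompl_isCompl_of_finrank_eq hrank
    have hR := R.closed_of_finiteDimensional
    have hrange := (LinearMap.range (T : E →ₗ[ℝ] F)).closed_of_finiteDimensional
    exact ⟨⟨⟨R, hR, hR₁⟩, hrange, ⟨S, hS, hS₁⟩⟩,
      chainRel_of_isCompl hR hS (closed_of_finiteDimensional _) hrange hR₀ hR₁ hS₀ hS₁⟩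

/-- **Remark (i) after Theorem 2.4.**
If `k < dim E` and `k < dim F` and `T₀ ∈ B(E,F)` has finite-dimensional range
with `dim range T₀ = k`, then the equivalence class
`T̃₀ = { T : T double splitting and T₀ ≈ T }` equals
`F_k = { T : dim range T = k }`. -/
theorem equivalence_class_eq_Fk
    (k : ℕ) (hkE : (k : Cardinal) < Module.rank ℝ E)
    (hkF : (k : Cardinal) < Module.rank ℝ F)
    (T₀ : E →L[ℝ] F)
    (hT₀fin : FiniteDimensional ℝ (LinearMap.range (T₀ : E →ₗ[ℝ] F)))
    (hT₀rk : Module.finrank ℝ (LinearMap.range (T₀ : E →ₗ[ℝ] F)) = k) :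
    {T : E →L[ℝ] F | IsDoubleSplitting T ∧ ChainRel T₀ T} =
      {T : E →L[ℝ] F | FiniteDimensional ℝ (LinearMap.range (T : E →ₗ[ℝ] F)) ∧
        Module.finrank ℝ (LinearMap.range (T : E →ₗ[ℝ] F)) = k} :=
  equivalence_class_eq_Fk_general k T₀ hT₀fin hT₀rk
end

section
/- Let E, F be real Banach spaces and let m, n be natural numbers with m > 0 or n > 0. If T₀ ∈ B(E,F) has dim ker T₀ = m (finite), range T₀ closed, and dim (F / range T₀) = n (finite), then the equivalence class T̃₀ = { T ∈ B(E,F) : T double splitting and T₀ ≈ T } (for the common-complement chain relation ≈) equals Φ_{m,n} = { T ∈ B(E,F) : dim ker T = m, range T closed, dim (F / range T) = n }. -/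
/-!
Membership in the class depends only on `ker T` and `range T`, and two subspaces with a common
complement `R` are isomorphic (both to `E ⧸ R`), as are the quotients by them (both to `R`).
Along a chain, the dimension of the kernel and the codimension of the range are therefore
preserved.

Conversely, two finite-dimensional subspaces of equal dimension, or two subspaces of equal
finite codimension, already have a common complement, so a chain of length one suffices.
If neither subspace contains the other, pick `x ∈ M \ M'` and `y ∈ M' \ M`. Then `v = x + y`
lies in neither, and adjoining `v` to both raises both dimensions (or lowers both
codimensions) by one. A common complement `D` of the enlarged pair yields the common
complement `span {v} ⊔ D` of the original pair. For kernels the recursion ends at a closed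
complement supplied by Hahn–Banach and only adds lines, so the result stays closed. For
ranges every complement is finite-dimensional, hence closed.
-/

variable {E F : Type*}
  [NormedAddCommGroup E] [NormedSpace ℝ E] [CompleteSpace E]
  [NormedAddCommGroup F] [NormedSpace ℝ F] [CompleteSpace F]

open Module Submodule

namespace Submodule

theorem exists_mem_sup_notMem_notMem {R V : Type*} [Ring R] [AddCommGroup V] [Module R V]
    {M M' : Submodule R V} (h : ¬M ≤ M') (h' : ¬M' ≤ M) :
    ∃ v ∈ M ⊔ M', v ∉ M ∧ v ∉ M' := by
  obtain ⟨x, hxM, hxM'⟩ := SetLike.not_le_iff_exists.1 h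
  obtain ⟨y, hyM', hyM⟩ := SetLike.not_le_iff_exists.1 h'
  refine ⟨x + y, add_mem_sup hxM hyM', fun hM => hyM ?_, fun hM' => hxM' ?_⟩
  · simpa using sub_mem hM hxM
  · simpa using sub_mem hM' hyM'

section DivisionRing

variable {K V : Type*} [DivisionRing K] [AddCommGroup V] [Module K V]

theorem isCompl_span_singleton_sup {M D : Submodule K V} {v : V} (hv : v ∉ M)
    (h : IsCompl (M ⊔ K ∙ v) D) : IsCompl M (K ∙ v ⊔ D) :=
  (disjoint_span_singleton.2 fun hv' => (hv hv').elim).isCompl_sup_right_of_isCompl_sup_left h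

theorem finrank_sup_span_singleton_of_finiteDimensional {M : Submodule K V}
    [FiniteDimensional K M] {v : V} (hv : v ∉ M) :
    finrank K ↥(M ⊔ K ∙ v) = finrank K M + 1 := by
  have hv0 : v ≠ 0 := fun h => hv (h ▸ M.zero_mem)
  have h := finrank_sup_add_finrank_inf_eq M (K ∙ v)
  rwa [(disjoint_span_singleton.2 fun hv' => (hv hv').elim).eq_bot, finrank_bot, add_zero,
    finrank_span_singleton hv0] at h

theorem finrank_quotient_add_finrank_map_mkQ {G H : Submodule K V} [FiniteDimensional K (V ⧸ G)]
    (hGH : G ≤ H) : finrank K (V ⧸ H) + finrank K (H.map G.mkQ) = finrank K (V ⧸ G) := by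
  rw [← (quotientQuotientEquivQuotient G H hGH).finrank_eq]
  exact finrank_quotient_add_finrank _

theorem eq_of_le_of_finrank_quotient_eq {G H : Submodule K V} [FiniteDimensional K (V ⧸ G)]
    (hGH : G ≤ H) (h : finrank K (V ⧸ G) = finrank K (V ⧸ H)) : G = H := by
  have hmap : H.map G.mkQ = ⊥ := by
    have := finrank_quotient_add_finrank_map_mkQ hGH
    exact finrank_eq_zero.1 (by omega)
  refine le_antisymm hGH fun x hx => ?_
  have : G.mkQ x ∈ H.map G.mkQ := mem_map_of_mem hx
  rwa [hmap, mem_bot, mkQ_apply, Quotient.mk_eq_zero] at this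

theorem finrank_quotient_sup_span_singleton {G : Submodule K V} [FiniteDimensional K (V ⧸ G)]
    {v : V} (hv : v ∉ G) : finrank K (V ⧸ (G ⊔ K ∙ v)) + 1 = finrank K (V ⧸ G) := by
  have hv0 : G.mkQ v ≠ 0 := by rwa [mkQ_apply, Ne, Quotient.mk_eq_zero]
  rw [← finrank_quotient_add_finrank_map_mkQ (le_sup_left : G ≤ G ⊔ K ∙ v), map_sup, mkQ_map_self,
    bot_sup_eq, map_span, Set.image_singleton, finrank_span_singleton hv0]

theorem exists_isCompl_isCompl_of_finrank_quotient_eq_s13 {G G' : Submodule K V}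
    [FiniteDimensional K (V ⧸ G)] [FiniteDimensional K (V ⧸ G')]
    (h : finrank K (V ⧸ G) = finrank K (V ⧸ G')) : ∃ S, IsCompl G S ∧ IsCompl G' S := by
  obtain ⟨n, hn⟩ : ∃ n, finrank K (V ⧸ G) = n := ⟨_, rfl⟩
  induction n using Nat.strong_induction_on generalizing G G' with
  | _ n ih =>
  by_cases hle : G ≤ G' ∨ G' ≤ G
  · obtain rfl : G = G' := hle.elim (eq_of_le_of_finrank_quotient_eq · h)
      fun hle => (eq_of_le_of_finrank_quotient_eq hle h.symm).symm
    obtain ⟨S, hS⟩ := G.exists_isCompl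
    exact ⟨S, hS, hS⟩
  rw [not_or] at hle
  obtain ⟨v, -, hvG, hvG'⟩ := exists_mem_sup_notMem_notMem hle.1 hle.2
  have hG := finrank_quotient_sup_span_singleton hvG
  have hG' := finrank_quotient_sup_span_singleton hvG'
  have : FiniteDimensional K (V ⧸ (G ⊔ K ∙ v)) := CoFG.of_le le_sup_left ‹_›
  have : FiniteDimensional K (V ⧸ (G' ⊔ K ∙ v)) := CoFG.of_le le_sup_left ‹_›
  obtain ⟨S, hS, hS'⟩ := ih (finrank K (V ⧸ (G ⊔ K ∙ v))) (by omega)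
    (G := G ⊔ K ∙ v) (G' := G' ⊔ K ∙ v) (by omega) rfl
  exact ⟨K ∙ v ⊔ S, isCompl_span_singleton_sup hvG hS, isCompl_span_singleton_sup hvG' hS'⟩

end DivisionRing

theorem exists_isClosed_isCompl_isCompl_of_finrank_eq_s13 {𝕜 E : Type*} [RCLike 𝕜]
    [NormedAddCommGroup E] [NormedSpace 𝕜 E] {M M' : Submodule 𝕜 E}
    [FiniteDimensional 𝕜 M] [FiniteDimensional 𝕜 M'] (h : finrank 𝕜 M = finrank 𝕜 M') :
    ∃ R : Submodule 𝕜 E, IsClosed (R : Set E) ∧ IsCompl M R ∧ IsCompl M' R := by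
  obtain ⟨k, hk⟩ : ∃ k, finrank 𝕜 ↥(M ⊔ M') - finrank 𝕜 M = k := ⟨_, rfl⟩
  induction k using Nat.strong_induction_on generalizing M M' with
  | _ k ih =>
  by_cases hle : M ≤ M' ∨ M' ≤ M
  · obtain rfl : M = M' := hle.elim (eq_of_le_of_finrank_eq · h)
      fun hle => (eq_of_le_of_finrank_eq hle h.symm).symm
    obtain ⟨R, hR, hMR⟩ := (ClosedComplemented.of_finiteDimensional M).exists_isClosed_isCompl
    exact ⟨R, hR, hMR, hMR⟩
  rw [not_or] at hle
  obtain ⟨v, hv, hvM, hvM'⟩ := exists_mem_sup_notMem_notMem hle.1 hle.2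
  have hvle : 𝕜 ∙ v ≤ M ⊔ M' := (span_singleton_le_iff_mem _ _).2 hv
  have hM := finrank_sup_span_singleton_of_finiteDimensional hvM
  have hM' := finrank_sup_span_singleton_of_finiteDimensional hvM'
  have hsup : M ⊔ 𝕜 ∙ v ⊔ (M' ⊔ 𝕜 ∙ v) = M ⊔ M' := by
    rw [← sup_sup_distrib_right, sup_eq_left.2 hvle]
  have hMW : finrank 𝕜 ↥(M ⊔ 𝕜 ∙ v) ≤ finrank 𝕜 ↥(M ⊔ M') := finrank_mono (sup_le le_sup_left hvle)
  obtain ⟨R, hR, hMR, hM'R⟩ := ih (finrank 𝕜 ↥(M ⊔ M') - finrank 𝕜 ↥(M ⊔ 𝕜 ∙ v)) (by omega)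
    (M := M ⊔ 𝕜 ∙ v) (M' := M' ⊔ 𝕜 ∙ v) (by omega) (by rw [hsup])
  exact ⟨𝕜 ∙ v ⊔ R, by rw [sup_comm]; exact isClosed_sup_finiteDimensional _ _ hR,
    isCompl_span_singleton_sup hvM hMR, isCompl_span_singleton_sup hvM' hM'R⟩

section Chain

variable {R V : Type*} [Ring R] [AddCommGroup V] [Module R V]

theorem nonempty_linearEquiv_of_isCompl_chain_s13 {k : ℕ} {N : Fin (k + 2) → Submodule R V}
    {C : Fin (k + 1) → Submodule R V}
    (h : ∀ i, IsCompl (N i.castSucc) (C i) ∧ IsCompl (N i.succ) (C i)) :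
    Nonempty (N 0 ≃ₗ[R] N (Fin.last (k + 1))) := by
  suffices ∀ i, Nonempty (N 0 ≃ₗ[R] N i) from this _
  intro i
  induction i using Fin.induction with
  | zero => exact ⟨LinearEquiv.refl R _⟩
  | succ i ih =>
    exact ih.map fun e => e.trans <| (quotientEquivOfIsCompl _ _ (h i).1.symm).symm.trans
      (quotientEquivOfIsCompl _ _ (h i).2.symm)

theorem nonempty_quotient_linearEquiv_of_isCompl_chain {k : ℕ}
    {G : Fin (k + 2) → Submodule R V} {C : Fin (k + 1) → Submodule R V}
    (h : ∀ i, IsCompl (G i.castSucc) (C i) ∧ IsCompl (G i.succ) (C i)) :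
    Nonempty ((V ⧸ G 0) ≃ₗ[R] V ⧸ G (Fin.last (k + 1))) := by
  suffices ∀ i, Nonempty ((V ⧸ G 0) ≃ₗ[R] V ⧸ G i) from this _
  intro i
  induction i using Fin.induction with
  | zero => exact ⟨LinearEquiv.refl R _⟩
  | succ i ih =>
    exact ih.map fun e => e.trans <| (quotientEquivOfIsCompl _ _ (h i).1).trans
      (quotientEquivOfIsCompl _ _ (h i).2).symm

end Chain

end Submodule

namespace ChainRel

variable {E F : Type*} [NormedAddCommGroup E] [NormedSpace ℝ E]
  [NormedAddCommGroup F] [NormedSpace ℝ F] {T₀ T₁ : E →L[ℝ] F}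

theorem nonempty_ker_linearEquiv (h : ChainRel T₀ T₁) :
    Nonempty (LinearMap.ker (T₀ : E →ₗ[ℝ] F) ≃ₗ[ℝ] LinearMap.ker (T₁ : E →ₗ[ℝ] F)) := by
  obtain ⟨_, _, N, _, _, _, -, -, -, -, hN₀, hN₁, -, -, hNR, -⟩ := h
  rw [← hN₀, ← hN₁]
  exact nonempty_linearEquiv_of_isCompl_chain_s13 hNR

theorem nonempty_coker_linearEquiv (h : ChainRel T₀ T₁) :
    Nonempty ((F ⧸ LinearMap.range (T₀ : E →ₗ[ℝ] F)) ≃ₗ[ℝ]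
      F ⧸ LinearMap.range (T₁ : E →ₗ[ℝ] F)) := by
  obtain ⟨_, _, _, _, G, _, -, -, -, -, -, -, hG₀, hG₁, -, hGS⟩ := h
  rw [← hG₀, ← hG₁]
  exact nonempty_quotient_linearEquiv_of_isCompl_chain hGS

theorem of_isCompl {R : Submodule ℝ E} {S : Submodule ℝ F}
    (hR : IsClosed (R : Set E)) (hR₀ : IsCompl (LinearMap.ker (T₀ : E →ₗ[ℝ] F)) R)
    (hR₁ : IsCompl (LinearMap.ker (T₁ : E →ₗ[ℝ] F)) R)
    (hS : IsClosed (S : Set F)) (hS₀ : IsCompl (LinearMap.range (T₀ : E →ₗ[ℝ] F)) S)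
    (hS₁ : IsCompl (LinearMap.range (T₁ : E →ₗ[ℝ] F)) S)
    (hT₀ : IsClosed (LinearMap.range (T₀ : E →ₗ[ℝ] F) : Set F))
    (hT₁ : IsClosed (LinearMap.range (T₁ : E →ₗ[ℝ] F) : Set F)) :
    ChainRel T₀ T₁ := by
  refine ⟨0, 0, ![LinearMap.ker (T₀ : E →ₗ[ℝ] F), LinearMap.ker (T₁ : E →ₗ[ℝ] F)], ![R],
    ![LinearMap.range (T₀ : E →ₗ[ℝ] F), LinearMap.range (T₁ : E →ₗ[ℝ] F)], ![S],
    ?_, ?_, ?_, ?_, rfl, rfl, rfl, rfl, ?_, ?_⟩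
  · intro i; fin_cases i
    exacts [T₀.isClosed_ker, T₁.isClosed_ker]
  · intro i; fin_cases i; exact hR
  · intro j; fin_cases j
    exacts [hT₀, hT₁]
  · intro j; fin_cases j; exact hS
  · intro i; fin_cases i; exact ⟨hR₀, hR₁⟩
  · intro j; fin_cases j; exact ⟨hS₀, hS₁⟩

end ChainRel

theorem equivalence_class_eq_Phi_general
    (m n : ℕ)
    (T₀ : E →L[ℝ] F)
    (hker : FiniteDimensional ℝ (LinearMap.ker (T₀ : E →ₗ[ℝ] F)))
    (hkerrk : Module.finrank ℝ (LinearMap.ker (T₀ : E →ₗ[ℝ] F)) = m)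
    (hrc : IsClosed (LinearMap.range (T₀ : E →ₗ[ℝ] F) : Set F))
    (hcoker : FiniteDimensional ℝ (F ⧸ LinearMap.range (T₀ : E →ₗ[ℝ] F)))
    (hcokerrk : Module.finrank ℝ (F ⧸ LinearMap.range (T₀ : E →ₗ[ℝ] F)) = n) :
    {T : E →L[ℝ] F | IsDoubleSplitting T ∧ ChainRel T₀ T} =
      {T : E →L[ℝ] F | FiniteDimensional ℝ (LinearMap.ker (T : E →ₗ[ℝ] F)) ∧
        Module.finrank ℝ (LinearMap.ker (T : E →ₗ[ℝ] F)) = m ∧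
        IsClosed (LinearMap.range (T : E →ₗ[ℝ] F) : Set F) ∧
        FiniteDimensional ℝ (F ⧸ LinearMap.range (T : E →ₗ[ℝ] F)) ∧
        Module.finrank ℝ (F ⧸ LinearMap.range (T : E →ₗ[ℝ] F)) = n} := by
  ext T
  constructor
  · rintro ⟨⟨-, hT, -⟩, hchain⟩
    obtain ⟨eN⟩ := hchain.nonempty_ker_linearEquiv
    obtain ⟨eQ⟩ := hchain.nonempty_coker_linearEquiv
    exact ⟨eN.finiteDimensional, eN.finrank_eq.symm.trans hkerrk, hT,
      eQ.finiteDimensional, eQ.finrank_eq.symm.trans hcokerrk⟩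
  · rintro ⟨hkerT, hkerrkT, hT, hcokerT, hcokerrkT⟩
    obtain ⟨R, hR, hR₀, hR₁⟩ :=
      exists_isClosed_isCompl_isCompl_of_finrank_eq_s13 (hkerrk.trans hkerrkT.symm)
    obtain ⟨S, hS₀, hS₁⟩ :=
      exists_isCompl_isCompl_of_finrank_quotient_eq_s13 (hcokerrk.trans hcokerrkT.symm)
    have : FiniteDimensional ℝ S := (quotientEquivOfIsCompl _ _ hS₀).finiteDimensional
    have hS : IsClosed (S : Set F) := S.closed_of_finiteDimensional
    exact ⟨⟨⟨R, hR, hR₁⟩, hT, ⟨S, hS, hS₁⟩⟩, .of_isCompl hR hR₀ hR₁ hS hS₀ hS₁ hrc hT⟩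

/-- **Remark (ii) after Theorem 2.4.**
If `m > 0` or `n > 0` and `T₀ ∈ B(E,F)` has `dim ker T₀ = m` (finite), closed
range and `dim (F / range T₀) = n` (finite), then the equivalence class
`T̃₀ = { T : T double splitting and T₀ ≈ T }` equals `Φ_{m,n}`. -/
theorem equivalence_class_eq_Phi
    (m n : ℕ) (hmn : 0 < m ∨ 0 < n)
    (T₀ : E →L[ℝ] F)
    (hker : FiniteDimensional ℝ (LinearMap.ker (T₀ : E →ₗ[ℝ] F)))
    (hkerrk : Module.finrank ℝ (LinearMap.ker (T₀ : E →ₗ[ℝ] F)) = m)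
    (hrc : IsClosed (LinearMap.range (T₀ : E →ₗ[ℝ] F) : Set F))
    (hcoker : FiniteDimensional ℝ (F ⧸ LinearMap.range (T₀ : E →ₗ[ℝ] F)))
    (hcokerrk : Module.finrank ℝ (F ⧸ LinearMap.range (T₀ : E →ₗ[ℝ] F)) = n) :
    {T : E →L[ℝ] F | IsDoubleSplitting T ∧ ChainRel T₀ T} =
      {T : E →L[ℝ] F | FiniteDimensional ℝ (LinearMap.ker (T : E →ₗ[ℝ] F)) ∧
        Module.finrank ℝ (LinearMap.ker (T : E →ₗ[ℝ] F)) = m ∧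
        IsClosed (LinearMap.range (T : E →ₗ[ℝ] F) : Set F) ∧
        FiniteDimensional ℝ (F ⧸ LinearMap.range (T : E →ₗ[ℝ] F)) ∧
        Module.finrank ℝ (F ⧸ LinearMap.range (T : E →ₗ[ℝ] F)) = n} :=
  equivalence_class_eq_Phi_general m n T₀ hker hkerrk hrc hcoker hcokerrk
end

section
/- Let m, n be natural numbers and let A : ℝ^m →ₗ[ℝ] ℝ^n be a linear map of rank k (dim range A = k). Then the subspace { T : ℝ^m →ₗ[ℝ] ℝ^n : T x ∈ range A for all x ∈ ker A } of the space of linear maps from ℝ^m to ℝ^n has dimension (m + n − k)·k. -/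
/-- The tangent space at `A` of the set of rank-`k` linear maps `ℝ^m → ℝ^n`:
the subspace `{ T : T x ∈ range A for all x ∈ ker A }` of the space of all
linear maps `ℝ^m → ℝ^n`. -/
noncomputable def tangentSpaceAt (m n : ℕ) (A : (Fin m → ℝ) →ₗ[ℝ] (Fin n → ℝ)) :
    Submodule ℝ ((Fin m → ℝ) →ₗ[ℝ] (Fin n → ℝ)) where
  carrier := {T | ∀ x ∈ LinearMap.ker A, T x ∈ LinearMap.range A}
  add_mem' := fun hS hT x hx => by
    simpa using add_mem (hS x hx) (hT x hx)
  zero_mem' := fun x _ => by simp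
  smul_mem' := fun c T hT x hx => by
    simpa using Submodule.smul_mem _ c (hT x hx)

/-- **Dimension formula (Theorem 3.2).**
If `A : ℝ^m → ℝ^n` is a linear map of rank `k`, then the subspace
`{ T : ℝ^m → ℝ^n linear : T(ker A) ⊆ range A }` has dimension `(m + n - k)·k`. -/
theorem dim_tangentSpace_rank_k
    (m n k : ℕ) (A : (Fin m → ℝ) →ₗ[ℝ] (Fin n → ℝ))
    (hA : Module.finrank ℝ (LinearMap.range A) = k) :
    Module.finrank ℝ (tangentSpaceAt m n A) = (m + n - k) * k := by
  classical
  have K_def : True := trivial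
  let Φ : ((Fin m → ℝ) →ₗ[ℝ] (Fin n → ℝ)) →ₗ[ℝ] (LinearMap.ker A →ₗ[ℝ] ((Fin n → ℝ) ⧸ LinearMap.range A)) :=
    { toFun := fun T => (LinearMap.range A).mkQ ∘ₗ (T ∘ₗ (LinearMap.ker A).subtype)
      map_add' := fun S T => by ext x; simp
      map_smul' := fun c T => by ext x; simp }
  -- Φ is surjective
  have hsurj : Function.Surjective Φ := by
    intro g
    obtain ⟨s, hs⟩ := (LinearMap.range A).mkQ.exists_rightInverse_of_surjective
      (LinearMap.range_eq_top.2 (Submodule.mkQ_surjective (LinearMap.range A)))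
    obtain ⟨T, hT⟩ := LinearMap.exists_extend (s ∘ₗ g)
    refine ⟨T, ?_⟩
    ext x
    have : (T ∘ₗ (LinearMap.ker A).subtype) x = (s ∘ₗ g) x := by rw [hT]
    simp only [Φ, LinearMap.coe_mk, AddHom.coe_mk, LinearMap.comp_apply] at this ⊢
    rw [this]
    have h2 := LinearMap.congr_fun hs (g x)
    simpa using h2
  -- ker Φ = tangent space
  have hker : LinearMap.ker Φ = tangentSpaceAt m n A := by
    ext T
    constructor
    · intro hT x hx
      have := LinearMap.congr_fun hT ⟨x, hx⟩
      simp only [Φ, LinearMap.coe_mk, AddHom.coe_mk, LinearMap.comp_apply,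
        Submodule.coe_subtype, LinearMap.zero_apply, Submodule.mkQ_apply,
        Submodule.Quotient.mk_eq_zero] at this
      exact this
    · intro hT
      apply LinearMap.mem_ker.2
      ext x
      simp only [Φ, LinearMap.coe_mk, AddHom.coe_mk, LinearMap.comp_apply,
        Submodule.coe_subtype, LinearMap.zero_apply, Submodule.mkQ_apply,
        Submodule.Quotient.mk_eq_zero]
      exact hT x x.2
  have hkm : k ≤ m := by
    have := hA ▸ LinearMap.finrank_range_le A
    simpa using this
  have hkn : k ≤ n := by
    have := hA ▸ Submodule.finrank_le (LinearMap.range A)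
    simpa using this
  have hK : Module.finrank ℝ (LinearMap.ker A) = m - k := by
    have := LinearMap.finrank_range_add_finrank_ker A
    rw [hA] at this
    simp only [Module.finrank_pi, Fintype.card_fin] at this
    omega
  have hQ : Module.finrank ℝ ((Fin n → ℝ) ⧸ LinearMap.range A) = n - k := by
    have := Submodule.finrank_quotient_add_finrank (LinearMap.range A)
    rw [hA] at this
    simp only [Module.finrank_pi, Fintype.card_fin] at this
    omega
  have hrange : Module.finrank ℝ (LinearMap.range Φ) = (m - k) * (n - k) := by
    rw [LinearMap.range_eq_top.2 hsurj, finrank_top, Module.finrank_linearMap, hK, hQ]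
  have h1 := LinearMap.finrank_range_add_finrank_ker Φ
  rw [hrange, hker] at h1
  have hdom : Module.finrank ℝ ((Fin m → ℝ) →ₗ[ℝ] (Fin n → ℝ)) = m * n := by
    simp [Module.finrank_linearMap]
  rw [hdom] at h1
  have key : m * n = (m - k) * (n - k) + (m + n - k) * k := by
    obtain ⟨a, rfl⟩ := Nat.exists_eq_add_of_le hkm
    obtain ⟨b, rfl⟩ := Nat.exists_eq_add_of_le hkn
    have e1 : k + a - k = a := by omega
    have e2 : k + b - k = b := by omega
    have e3 : k + a + (k + b) - k = k + a + b := by omega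
    rw [e1, e2, e3]
    ring
  exact Nat.add_left_cancel (h1.trans key)
end
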